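/- arXiv:2307.10840 — 2 statements merged into one kernel-verified Lean document; each statement's English description precedes it below -/
import Mathlib

section
/- Fix l ≥ 2. For every N ≥ 1 and k ∈ {0,1,...,l-2}, p(k,N) = (2^{N+1}/l) · ∑_{s=1}^{l-1} cos^N(sπ/l) · sin(sπ/l) · sin(s(k+1)π/l). -/
/-- The tilting multiplicity `p(k,N)`, defined by the recursion `p(k,0) = [k = 0]`,
`p(k,N) = p(k-1,N-1) + p(k+1,N-1)` for `0 ≤ k ≤ l-3`, `p(l-2,N) = p(l-3,N-1)`,
with the convention `p(-1,·) = 0`. -/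
def p (l : ℕ) : ℕ → ℕ → ℕ
  | 0, k => if k = 0 then 1 else 0
  | N + 1, k =>
    if k + 2 = l then (if 3 ≤ l then p l N (l - 3) else 0)
    else if k = 0 then p l N 1
    else p l N (k - 1) + p l N (k + 1)

/-!
The sum `f_N(x) = 2^(N+1)/l * ∑_s cos^N(sπ/l) sin(sπ/l) sin(sxπ/l)` satisfies
`f_(N+1)(x) = f_N(x-1) + f_N(x+1)` because `2 cos a sin b = sin (b - a) + sin (b + a)`, and it
vanishes at `x = 0` and `x = l`; these two zeros are exactly the boundary conditions of the
recursion for `p`, so `p(k,N) = f_N(k+1)` follows by induction on `N`. At `N = 0`, `f_0(k+1)`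
is the orthogonality relation of the discrete sine basis, which reduces by product-to-sum to
cosine sums `∑_{s<l} cos(smπ/l)` that telescope after multiplying by `2 sin(mπ/2l)`.
-/

open Real Finset

theorem two_mul_sin_half_mul_sum_range_cos (θ : ℝ) (n : ℕ) :
    2 * sin (θ / 2) * ∑ s ∈ range n, cos (s * θ) = sin (n * θ - θ / 2) + sin (θ / 2) := by
  induction n with
  | zero => simp
  | succ n ih =>
    have hstep : 2 * sin (θ / 2) * cos (n * θ) =
        sin ((n + 1) * θ - θ / 2) - sin (n * θ - θ / 2) := by
      rw [two_mul_sin_mul_cos, ← neg_sub (n * θ) (θ / 2), sin_neg]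
      ring_nf
    rw [sum_range_succ, mul_add, ih, hstep]
    push_cast
    ring

theorem sum_range_cos_mul_pi_div {l m : ℕ} (hm : 0 < m) (hml : m < 2 * l) :
    ∑ s ∈ range l, cos (s * (m * π / l)) = (1 - (-1) ^ m) / 2 := by
  have hl : (0 : ℝ) < l := by exact_mod_cast (show 0 < l by omega)
  have hsin : sin (m * π / l / 2) ≠ 0 := by
    refine (sin_pos_of_pos_of_lt_pi (by positivity) ?_).ne'
    rw [div_div, div_lt_iff₀ (by positivity)]
    have : (m : ℝ) < l * 2 := by exact_mod_cast (by omega : m < l * 2)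
    nlinarith [pi_pos]
  have key := two_mul_sin_half_mul_sum_range_cos (m * π / l) l
  rw [mul_div_cancel₀ _ hl.ne', sin_nat_mul_pi_sub] at key
  apply mul_left_cancel₀ (mul_ne_zero two_ne_zero hsin)
  rw [key]
  ring

theorem sum_range_sin_mul_sin_mul_pi_div {l j : ℕ} (hj : j + 2 ≤ l) :
    ∑ s ∈ range l, sin (s * π / l) * sin (s * (j + 1) * π / l) =
      if j = 0 then (l : ℝ) / 2 else 0 := by
  have hprod (s : ℕ) : sin (s * π / l) * sin (s * (j + 1) * π / l) =
      (cos (s * (j * π / l)) - cos (s * ((j + 2 : ℕ) * π / l))) / 2 := by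
    rw [eq_div_iff two_ne_zero, mul_comm _ (2 : ℝ), ← mul_assoc, two_mul_sin_mul_sin, ← cos_neg]
    push_cast
    ring_nf
  simp_rw [hprod, ← sum_div, sum_sub_distrib]
  rw [sum_range_cos_mul_pi_div (m := j + 2) (by omega) (by omega)]
  split_ifs with hj0
  · subst hj0
    simp
  · rw [sum_range_cos_mul_pi_div (by omega) (by omega)]
    ring

noncomputable def pTrig (l N : ℕ) (x : ℝ) : ℝ :=
  2 ^ (N + 1) / l *
    ∑ s ∈ Icc 1 (l - 1), cos (s * π / l) ^ N * sin (s * π / l) * sin (s * x * π / l)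

theorem pTrig_zero_right (l N : ℕ) : pTrig l N 0 = 0 := by
  simp [pTrig]

theorem pTrig_self (l N : ℕ) : pTrig l N l = 0 := by
  rcases eq_or_ne l 0 with rfl | hl
  · simp [pTrig]
  refine mul_eq_zero_of_right _ (sum_eq_zero fun s _ => ?_)
  rw [show (s : ℝ) * l * π / l = s * π by field_simp, sin_nat_mul_pi, mul_zero]

theorem pTrig_succ (l N : ℕ) (x : ℝ) :
    pTrig l (N + 1) x = pTrig l N (x - 1) + pTrig l N (x + 1) := by
  have hterm (s : ℕ) : cos (s * π / l) ^ (N + 1) * sin (s * π / l) * sin (s * x * π / l) * 2 =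
      cos (s * π / l) ^ N * sin (s * π / l) * sin (s * (x - 1) * π / l) +
        cos (s * π / l) ^ N * sin (s * π / l) * sin (s * (x + 1) * π / l) := by
    have h := two_mul_sin_mul_cos (s * x * π / l) (s * π / l)
    rw [show s * x * π / l - s * π / l = s * (x - 1) * π / l by ring,
      show s * x * π / l + s * π / l = s * (x + 1) * π / l by ring] at h
    rw [← mul_add, ← h, pow_succ]
    ring
  simp only [pTrig, ← mul_add, ← sum_add_distrib, ← hterm, ← sum_mul]
  ring

theorem pTrig_zero_left {l k : ℕ} (hk : k + 2 ≤ l) :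
    pTrig l 0 (k + 1) = if k = 0 then 1 else 0 := by
  have hl : (l : ℝ) ≠ 0 := by exact_mod_cast (show l ≠ 0 by omega)
  have hsum : ∑ s ∈ Icc 1 (l - 1), sin (s * π / l) * sin (s * (k + 1) * π / l) =
      ∑ s ∈ range l, sin (s * π / l) * sin (s * (k + 1) * π / l) := by
    rw [sum_range_eq_add_Ico _ (by omega),
      Icc_sub_one_right_eq_Ico_of_not_isMin (not_isMin_of_lt (show 0 < l by omega))]
    simp
  simp only [pTrig, pow_zero, one_mul, zero_add, pow_one]
  rw [hsum, sum_range_sin_mul_sin_mul_pi_div hk]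
  split_ifs
  · field_simp
  · simp

theorem p_eq_pTrig {l : ℕ} (hl : 2 ≤ l) (N : ℕ) {k : ℕ} (hk : k ≤ l - 2) :
    (p l N k : ℝ) = pTrig l N (k + 1) := by
  induction N generalizing k with
  | zero =>
    rw [pTrig_zero_left (by omega)]
    simp [p]
  | succ N ih =>
    rw [pTrig_succ, add_sub_cancel_right, add_assoc, one_add_one_eq_two]
    by_cases hkl : k + 2 = l
    · have hkl' : (k : ℝ) + 2 = l := by exact_mod_cast hkl
      rw [hkl', pTrig_self, add_zero]
      by_cases hl3 : 3 ≤ l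
      · rw [show p l (N + 1) k = p l N (l - 3) by simp [p, hkl, hl3], ih (by omega),
          Nat.cast_sub hl3]
        congr 1
        push_cast
        linarith
      · obtain rfl : k = 0 := by omega
        simp [p, hkl, hl3, pTrig_zero_right]
    · by_cases hk0 : k = 0
      · subst hk0
        simp only [p, hkl, if_true, if_false, Nat.cast_zero, pTrig_zero_right, zero_add]
        rw [ih (by omega)]
        norm_num
      · simp only [p, hkl, hk0, if_false]
        push_cast
        rw [ih (by omega), ih (by omega), Nat.cast_sub (by omega)]
        push_cast
        ring_nf

theorem stmt_16_general (l : ℕ) (hl : 2 ≤ l) (N k : ℕ) (hk : k ≤ l - 2) :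
    (p l N k : ℝ) =
      2 ^ (N + 1) / l *
        ∑ s ∈ Finset.Icc 1 (l - 1),
          Real.cos (s * Real.pi / l) ^ N * Real.sin (s * Real.pi / l) *
            Real.sin (s * (k + 1) * Real.pi / l) :=
  p_eq_pTrig hl N hk

theorem stmt_16 (l : ℕ) (hl : 2 ≤ l) (N k : ℕ) (hN : 1 ≤ N) (hk : k ≤ l - 2) :
    (p l N k : ℝ) =
      2 ^ (N + 1) / l *
        ∑ s ∈ Finset.Icc 1 (l - 1),
          Real.cos (s * Real.pi / l) ^ N * Real.sin (s * Real.pi / l) *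
            Real.sin (s * (k + 1) * Real.pi / l) :=
  stmt_16_general l hl N k hk
end

section
/- Fix l ≥ 2. For every N ≥ 1 and k ∈ {0,1,...,l-2}, p(k,N) ≤ 2^N · cos^N(π/l). -/
open Real Finset

noncomputable def vv (l j : ℕ) : ℝ := Real.sin (j * Real.pi / l)

lemma vv_zero (l : ℕ) : vv l 0 = 0 := by simp [vv]

lemma vv_l (l : ℕ) (hl : 2 ≤ l) : vv l l = 0 := by
  have hl0 : (l : ℝ) ≠ 0 := by positivity
  unfold vv
  rw [mul_comm, mul_div_assoc, div_self hl0, mul_one, Real.sin_pi]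

lemma vv_rec (l j : ℕ) (hl : 2 ≤ l) :
    vv l j + vv l (j + 2) = 2 * Real.cos (Real.pi / l) * vv l (j + 1) := by
  have hl0 : (l : ℝ) ≠ 0 := by positivity
  unfold vv
  push_cast
  have h1 : ((j : ℝ)) * Real.pi / l = ((j : ℝ) + 1) * Real.pi / l - Real.pi / l := by
    field_simp; ring
  have h2 : ((j : ℝ) + 2) * Real.pi / l = ((j : ℝ) + 1) * Real.pi / l + Real.pi / l := by
    field_simp; ring
  rw [h1, h2, Real.sin_sub, Real.sin_add]
  ring

lemma p_succ (l N k : ℕ) (hl : 2 ≤ l) (hk : k < l - 1) :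
    (p l (N + 1) k : ℝ) =
      (if k = 0 then 0 else (p l N (k - 1) : ℝ)) +
      (if k + 2 = l then 0 else (p l N (k + 1) : ℝ)) := by
  rw [p]
  by_cases h2 : k + 2 = l
  · by_cases h0 : k = 0
    · simp [h0, h2, show ¬ 3 ≤ l by omega]
    · have h3 : 3 ≤ l := by omega
      have hkl : k - 1 = l - 3 := by omega
      simp [h2, h0, h3, hkl]
  · by_cases h0 : k = 0
    · subst h0
      simp [h2]
    · simp [h2, h0]

lemma vv_pos (l k : ℕ) (hl : 2 ≤ l) (hk : k < l - 1) : 0 < vv l (k + 1) := by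
  have hl0 : (0:ℝ) < l := by positivity
  have hkl : ((k:ℝ) + 1) < l := by
    have : k + 1 < l := by omega
    exact_mod_cast this
  apply Real.sin_pos_of_pos_of_lt_pi
  · push_cast
    positivity
  · push_cast
    calc ((k:ℝ)+1) * Real.pi / l < (l:ℝ) * Real.pi / l := by
          gcongr
      _ = Real.pi := by field_simp

lemma sum_p (l : ℕ) (hl : 2 ≤ l) (N : ℕ) :
    ∑ j ∈ Finset.range (l - 1), (p l N j : ℝ) * vv l (j + 1)
      = (2 * Real.cos (Real.pi / l)) ^ N * vv l 1 := by
  induction N with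
  | zero =>
    rw [pow_zero, one_mul]
    rw [Finset.sum_eq_single 0]
    · simp [p]
    · intro b _ hb; simp [p, hb]
    · intro h; exact absurd (Finset.mem_range.mpr (by omega)) h
  | succ N ih =>
    have hm : l - 1 = (l - 2) + 1 := by omega
    calc ∑ j ∈ range (l-1), (p l (N+1) j : ℝ) * vv l (j+1)
        = ∑ j ∈ range (l-1), ((if j = 0 then 0 else (p l N (j-1):ℝ)) * vv l (j+1)
            + (if j + 2 = l then 0 else (p l N (j+1):ℝ)) * vv l (j+1)) := by
          refine Finset.sum_congr rfl fun j hj => ?_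
          rw [p_succ l N j hl (Finset.mem_range.mp hj), add_mul]
      _ = (∑ j ∈ range (l-1), (if j = 0 then 0 else (p l N (j-1):ℝ)) * vv l (j+1))
            + ∑ j ∈ range (l-1), (if j + 2 = l then 0 else (p l N (j+1):ℝ)) * vv l (j+1) :=
          Finset.sum_add_distrib
      _ = (∑ j ∈ range (l-1), (p l N j : ℝ) * vv l (j+2))
            + ∑ j ∈ range (l-1), (p l N j : ℝ) * vv l j := by
          congr 1
          · rw [hm, Finset.sum_range_succ', Finset.sum_range_succ]
            rw [show (l-2) + 1 + 1 = l from by omega, vv_l l hl, mul_zero, add_zero]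
            simp
          · rw [hm, Finset.sum_range_succ, Finset.sum_range_succ']
            rw [if_pos (show (l-2) + 2 = l from by omega), zero_mul, add_zero,
              vv_zero, mul_zero, add_zero]
            refine Finset.sum_congr rfl fun j hj => ?_
            rw [if_neg (by have := Finset.mem_range.mp hj; omega)]
      _ = ∑ j ∈ range (l-1), (p l N j : ℝ) * (vv l j + vv l (j+2)) := by
          rw [← Finset.sum_add_distrib]
          exact Finset.sum_congr rfl fun j _ => by ring
      _ = 2 * Real.cos (Real.pi/l) * ∑ j ∈ range (l-1), (p l N j : ℝ) * vv l (j+1) := by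
          rw [Finset.mul_sum]
          exact Finset.sum_congr rfl fun j _ => by rw [vv_rec l j hl]; ring
      _ = (2 * Real.cos (Real.pi/l))^(N+1) * vv l 1 := by rw [ih, pow_succ]; ring

lemma vv_one_le (l k : ℕ) (hl : 2 ≤ l) (hk : k < l - 1) : vv l 1 ≤ vv l (k + 1) := by
  have hl0 : (0:ℝ) < l := by positivity
  have hl2 : (2:ℝ) ≤ l := by exact_mod_cast hl
  have hpi := Real.pi_pos
  have hθ : (0:ℝ) < Real.pi / l := by positivity
  have hθ2 : Real.pi / l ≤ Real.pi / 2 :=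
    div_le_div_of_nonneg_left hpi.le two_pos hl2
  have hxv : vv l (k+1) = Real.sin (((k:ℝ)+1) * (Real.pi / l)) := by
    unfold vv; push_cast; rw [mul_div_assoc]
  have hv1 : vv l 1 = Real.sin (Real.pi / l) := by
    unfold vv; push_cast; rw [one_mul]
  set x : ℝ := ((k:ℝ)+1) * (Real.pi / l) with hxdef
  have hx_ge : Real.pi / l ≤ x := le_mul_of_one_le_left hθ.le (by
    have := Nat.cast_nonneg (α := ℝ) k
    linarith)
  have hkc : (k:ℝ) + 2 ≤ l := by exact_mod_cast (show k + 2 ≤ l by omega)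
  have hx_le : x ≤ Real.pi - Real.pi / l := by
    have h1 : x ≤ ((l:ℝ) - 1) * (Real.pi / l) := by
      apply mul_le_mul_of_nonneg_right (by linarith) hθ.le
    have h2 : ((l:ℝ) - 1) * (Real.pi / l) = Real.pi - Real.pi / l := by
      field_simp
    linarith
  rw [hxv, hv1]
  by_cases hc : x ≤ Real.pi / 2
  · exact Real.strictMonoOn_sin.monotoneOn
      (Set.mem_Icc.mpr ⟨by linarith, hθ2⟩) (Set.mem_Icc.mpr ⟨by linarith, hc⟩) hx_ge
  · push_neg at hc
    rw [← Real.sin_pi_sub x]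
    have m1 : -(Real.pi/2) ≤ Real.pi - x := by linarith
    have m2 : Real.pi - x ≤ Real.pi/2 := by linarith
    exact Real.strictMonoOn_sin.monotoneOn
      (Set.mem_Icc.mpr ⟨by linarith, hθ2⟩)
      (Set.mem_Icc.mpr ⟨m1, m2⟩) (by linarith)

theorem stmt_17 (l : ℕ) (hl : 2 ≤ l) (N k : ℕ) (hN : 1 ≤ N) (hk : k ≤ l - 2) :
    (p l N k : ℝ) ≤ 2 ^ N * Real.cos (Real.pi / l) ^ N := by
  have hk1 : k < l - 1 := by omega
  have hl2 : (2:ℝ) ≤ l := by exact_mod_cast hl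
  have hpi := Real.pi_pos
  have hcos : 0 ≤ Real.cos (Real.pi / l) := by
    apply Real.cos_nonneg_of_mem_Icc
    constructor
    · have : (0:ℝ) < Real.pi / l := by positivity
      linarith
    · exact div_le_div_of_nonneg_left hpi.le two_pos hl2
  have hmem : k ∈ Finset.range (l-1) := Finset.mem_range.mpr hk1
  have h1 : (p l N k : ℝ) * vv l (k+1) ≤ (2 * Real.cos (Real.pi/l))^N * vv l 1 := by
    rw [← sum_p l hl N]
    exact Finset.single_le_sum
      (fun j hj => mul_nonneg (Nat.cast_nonneg _) (vv_pos l j hl (Finset.mem_range.mp hj)).le)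
      hmem
  have h2 : (2 * Real.cos (Real.pi/l))^N * vv l 1
      ≤ (2 * Real.cos (Real.pi/l))^N * vv l (k+1) :=
    mul_le_mul_of_nonneg_left (vv_one_le l k hl hk1) (pow_nonneg (by positivity) N)
  have h3 := le_of_mul_le_mul_right (h1.trans h2) (vv_pos l k hl hk1)
  rw [mul_pow] at h3
  exact h3
end
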